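/- arXiv:1204.0918 — 5 statements merged into one kernel-verified Lean document; each statement's English description precedes it below -/
import Mathlib

section
/- Let G be a topological abelian group such that every compact subset of G is contained in some reflexive, dually embedded subgroup of G. Then the evaluation map α_G : G → G^∧∧ is surjective. -/
/-!
Let `η ∈ G^∧∧`. By continuity of `η` and the description of the compact-open topology, `η` maps
the polar `K^▷ = {χ | Re χ(K) ≥ 0}` of some compact `K ⊆ G` into the open right half-plane.
Choose a reflexive, dually embedded `L ⊇ K`. The annihilator `L^⊥` is a subgroup contained in
`K^▷`, so `η(L^⊥)` is a subgroup of the circle inside the right half-plane, hence trivial. As the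
restriction `G^∧ → L^∧` is onto with kernel `L^⊥`, `η` factors through a character `η'` of `L^∧`,
which is continuous because it has nonnegative real part on the neighbourhood `K^▷` of `1` in
`L^∧` (the circle has no small subgroups). Reflexivity of `L` gives `a ∈ L` with `α_L a = η'`, and
then `α_G a = η`.
-/

open Pointwise Function

noncomputable section

/-- The canonical evaluation homomorphism of a topological abelian group into its
Pontryagin bidual, `x ↦ (χ ↦ χ x)`. -/
noncomputable def pontryaginEval (G : Type*) [CommGroup G] [TopologicalSpace G]
    [IsTopologicalGroup G] : G →* PontryaginDual (PontryaginDual G) where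
  toFun x :=
    { toFun := fun χ => χ x
      map_one' := rfl
      map_mul' := fun _ _ => rfl
      continuous_toFun :=
        (continuous_eval_const (F := ContinuousMonoidHom G Circle) x :) }
  map_one' := ContinuousMonoidHom.ext fun χ => map_one χ
  map_mul' x y := ContinuousMonoidHom.ext fun χ => map_mul χ x y

/-- A topological group is protodiscrete (linear) if open subgroups form a
neighborhood base at the identity. -/
def Protodiscrete (G : Type*) [Group G] [TopologicalSpace G] : Prop :=
  ∀ U ∈ nhds (1 : G), ∃ V : Subgroup G, IsOpen (V : Set G) ∧ (V : Set G) ⊆ U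

/-- A topological group is precompact (totally bounded) if every neighborhood of the
identity has finitely many translates covering the group. -/
def Precompact (G : Type*) [Group G] [TopologicalSpace G] : Prop :=
  ∀ U ∈ nhds (1 : G), ∃ F : Finset G, ∀ x : G, ∃ f ∈ F, x ∈ f • U

/-- A topological abelian group is (Pontryagin) reflexive if the canonical evaluation
map into its bidual is a topological isomorphism. -/
def PontryaginReflexive (G : Type*) [CommGroup G] [TopologicalSpace G]
    [IsTopologicalGroup G] : Prop :=
  IsHomeomorph (pontryaginEval G)

/-- A subgroup is dually embedded if every continuous character of it extends to a
continuous character of the ambient group. -/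
def DuallyEmbedded {G : Type*} [CommGroup G] [TopologicalSpace G] [IsTopologicalGroup G]
    (L : Subgroup G) : Prop :=
  ∀ χ : PontryaginDual L, ∃ ψ : PontryaginDual G, ∀ x : L, ψ (x : G) = χ x

/-- The annihilator of a subset `K` of `G` in the dual group. -/
def annihilator {G : Type*} [CommGroup G] [TopologicalSpace G] [IsTopologicalGroup G]
    (K : Set G) : Subgroup (PontryaginDual G) where
  carrier := {χ | ∀ x ∈ K, χ x = 1}
  one_mem' := fun x _ => rfl
  mul_mem' := by
    intro a b ha hb x hx
    show a x * b x = 1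
    rw [ha x hx, hb x hx, one_mul]
  inv_mem' := by
    intro a ha x hx
    show (a x)⁻¹ = 1
    rw [ha x hx, inv_one]

/-- A `P`-space: every countable intersection of open sets is open. -/
def IsPSpace (X : Type*) [TopologicalSpace X] : Prop :=
  ∀ s : ℕ → Set X, (∀ n, IsOpen (s n)) → IsOpen (⋂ n, s n)

/-- A set is `Gδ`-dense if it meets every nonempty `Gδ`-set. -/
def GdeltaDense {X : Type*} [TopologicalSpace X] (s : Set X) : Prop :=
  ∀ t : ℕ → Set X, (∀ n, IsOpen (t n)) → (⋂ n, t n).Nonempty → (s ∩ ⋂ n, t n).Nonempty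

/-- The graph of a homomorphism, as a subgroup of the product. -/
def graphSubgroup {H₁ H₂ : Type*} [CommGroup H₁] [CommGroup H₂] (φ : H₁ →* H₂) :
    Subgroup (H₁ × H₂) where
  carrier := {p | p.2 = φ p.1}
  one_mem' := (map_one φ).symm
  mul_mem' := by
    rintro ⟨a, b⟩ ⟨c, d⟩ hb hd
    simp only [Set.mem_setOf_eq] at *
    simp [hb, hd]
  inv_mem' := by
    rintro ⟨a, b⟩ h
    simp only [Set.mem_setOf_eq] at *
    simp [h]

/-- The Σ-product of `D` copies of the circle group inside `𝕋^D`. -/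
def sigmaProd (D : Type*) : Subgroup (D → Circle) where
  carrier := {x | {d | x d ≠ 1}.Countable}
  one_mem' := by simp
  mul_mem' := by
    intro a b ha hb
    refine Set.Countable.mono ?_ (ha.union hb)
    intro d hd
    simp only [Set.mem_union, Set.mem_setOf_eq]
    by_contra h
    push_neg at h
    exact hd (by show a d * b d = 1; rw [h.1, h.2, one_mul])
  inv_mem' := by
    intro a ha
    refine Set.Countable.mono ?_ ha
    intro d hd
    simp only [Set.mem_setOf_eq] at *
    simpa [inv_eq_one] using hd

/-- The group of continuous `Circle`-valued functions on `Y`, as a subgroup of the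
product `Y → Circle`; the subspace topology is the topology of pointwise convergence. -/
def Cp (Y : Type*) [TopologicalSpace Y] : Subgroup (Y → Circle) where
  carrier := {f | Continuous f}
  one_mem' := continuous_const
  mul_mem' := fun hf hg => hf.mul hg
  inv_mem' := fun hf => hf.inv

/-- The one-point Lindelöfication of a discrete set `D`: the point `none` has the
co-countable sets as neighborhoods, all other points are isolated. -/
def Lind (D : Type*) := Option D

instance (D : Type*) : TopologicalSpace (Lind D) where
  IsOpen U := (none : Option D) ∈ U → {d : D | (some d : Option D) ∉ U}.Countable
  isOpen_univ := by intro _; exact Set.countable_empty.mono (fun d hd => hd trivial)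
  isOpen_inter := by
    intro U V hU hV h
    refine Set.Countable.mono ?_ ((hU h.1).union (hV h.2))
    intro d hd
    simp only [Set.mem_union, Set.mem_setOf_eq] at *
    by_contra hc
    push_neg at hc
    exact hd ⟨hc.1, hc.2⟩
  isOpen_sUnion := by
    intro S hS h
    obtain ⟨U, hUS, hU⟩ := h
    refine Set.Countable.mono ?_ (hS U hUS hU)
    intro d hd
    simp only [Set.mem_setOf_eq] at *
    exact fun hdU => hd ⟨U, hUS, hdU⟩

end


open Filter Topology Set Real

theorem Real.exists_cos_nat_mul_neg {θ : ℝ} (hθ : θ ≠ 0) (hθπ : |θ| ≤ π / 2) :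
    ∃ n : ℕ, Real.cos (n * θ) < 0 := by
  set t := |θ|
  have ht : 0 < t := abs_pos.2 hθ
  -- `n * t` is the first multiple of `t` beyond `π / 2`, so it is at most `π / 2 + t ≤ π`.
  refine ⟨⌊π / 2 / t⌋₊ + 1, ?_⟩
  have hlt : π / 2 / t < ⌊π / 2 / t⌋₊ + 1 := Nat.lt_floor_add_one _
  have hle : (⌊π / 2 / t⌋₊ : ℝ) ≤ π / 2 / t := Nat.floor_le (by positivity)
  rw [← Real.cos_abs, abs_mul, Nat.abs_cast]
  push_cast
  apply Real.cos_neg_of_pi_div_two_lt_of_lt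
  · calc π / 2 = π / 2 / t * t := by field_simp
      _ < _ := by gcongr
  · calc ((⌊π / 2 / t⌋₊ : ℝ) + 1) * t ≤ (π / 2 / t + 1) * t := by gcongr
      _ = π / 2 + t := by field_simp
      _ < π + π / 2 := by linarith [pi_pos]

namespace Circle

theorem re_pow_eq_cos (z : Circle) (n : ℕ) :
    ((z ^ n : Circle) : ℂ).re = Real.cos (n * Complex.arg z) := by
  conv_lhs => rw [← exp_arg z, ← exp_natCast_mul, coe_exp]
  exact_mod_cast Complex.exp_ofReal_mul_I_re _

theorem eq_one_of_forall_re_pow_nonneg {z : Circle} (h : ∀ n : ℕ, 0 ≤ ((z ^ n : Circle) : ℂ).re) :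
    z = 1 := by
  rw [← arg_eq_zero]
  by_contra hz
  have hθπ : |Complex.arg z| ≤ π / 2 := Complex.abs_arg_le_pi_div_two_iff.2 (by simpa using h 1)
  obtain ⟨n, hn⟩ := Real.exists_cos_nat_mul_neg hz hθπ
  exact hn.not_ge (re_pow_eq_cos z n ▸ h n)

theorem exists_setOf_re_pow_nonneg_subset {V : Set Circle} (hV : V ∈ 𝓝 1) :
    ∃ n : ℕ, {z : Circle | ∀ j ≤ n, 0 ≤ ((z ^ j : Circle) : ℂ).re} ⊆ V := by
  have hclosed (n : ℕ) : IsClosed {z : Circle | ∀ j ≤ n, 0 ≤ ((z ^ j : Circle) : ℂ).re} := by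
    simp only [ofPred_forall]
    exact isClosed_iInter fun j => isClosed_iInter fun _ => isClosed_le continuous_const
      (Complex.continuous_re.comp (continuous_subtype_val.comp (continuous_pow j)))
  refine exists_subset_nhds_of_isCompact'
    (V := fun n => {z : Circle | ∀ j ≤ n, 0 ≤ ((z ^ j : Circle) : ℂ).re})
    (Antitone.directed_ge fun m n hmn z hz j hj => hz j (hj.trans hmn))
    (fun n => (hclosed n).isCompact) hclosed fun z hz => ?_
  rw [eq_one_of_forall_re_pow_nonneg fun n => mem_iInter.1 hz n n le_rfl]
  exact hV

theorem isOpen_setOf_re_pos : IsOpen {w : Circle | 0 < (w : ℂ).re} :=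
  isOpen_lt continuous_const (Complex.continuous_re.comp continuous_subtype_val)

end Circle

namespace MonoidHom

theorem continuous_of_re_nonneg {H : Type*} [Group H] [TopologicalSpace H] [IsTopologicalGroup H]
    (f : H →* Circle) {U : Set H} (hU : U ∈ 𝓝 1) (hf : ∀ x ∈ U, 0 ≤ ((f x : Circle) : ℂ).re) :
    Continuous f := by
  refine continuous_of_continuousAt_one f fun V hV => ?_
  rw [map_one] at hV
  obtain ⟨n, hn⟩ := Circle.exists_setOf_re_pow_nonneg_subset hV
  have hpow : ∀ᶠ x in 𝓝 (1 : H), ∀ j ∈ Iic n, x ^ j ∈ U :=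
    (eventually_all_finite (finite_Iic n)).2 fun j _ =>
      (continuous_pow j).continuousAt.preimage_mem_nhds (by rwa [one_pow])
  exact mem_map.2 <| mem_of_superset hpow fun x hx => hn fun j hj => by
    rw [← map_pow]
    exact hf _ (hx j hj)

theorem le_ker_of_re_nonneg {A : Type*} [Group A] (f : A →* Circle) {S : Subgroup A}
    (hS : ∀ a ∈ S, 0 ≤ ((f a : Circle) : ℂ).re) : S ≤ f.ker := fun a ha =>
  f.mem_ker.2 <| Circle.eq_one_of_forall_re_pow_nonneg fun n =>
    map_pow f a n ▸ hS _ (S.pow_mem ha n)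

end MonoidHom

namespace PontryaginDual

variable {A : Type*} [Monoid A] [TopologicalSpace A]

def polar (K : Set A) : Set (PontryaginDual A) :=
  {χ | ∀ x ∈ K, 0 ≤ ((χ x : Circle) : ℂ).re}

theorem polar_mem_nhds_one {K : Set A} (hK : IsCompact K) : polar K ∈ 𝓝 (1 : PontryaginDual A) := by
  have hopen : IsOpen {χ : PontryaginDual A | MapsTo χ K {w : Circle | 0 < (w : ℂ).re}} :=
    (ContinuousMap.isOpen_setOfPred_mapsTo hK Circle.isOpen_setOf_re_pos).preimage
      (ContinuousMonoidHom.isInducing_toContinuousMap A Circle).continuous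
  refine mem_of_superset (hopen.mem_nhds fun x _ => ?_) fun χ hχ x hx => (hχ hx).le
  simp

theorem exists_polar_subset_setOf_mapsTo [ContinuousMul A] {K : Set A} (hK : IsCompact K)
    {V : Set Circle} (hV : IsOpen V) (h1 : MapsTo (1 : PontryaginDual A) K V) :
    ∃ K' : Set A, IsCompact K' ∧ polar K' ⊆ {χ | MapsTo χ K V} := by
  rcases K.eq_empty_or_nonempty with rfl | ⟨x₀, hx₀⟩
  · exact ⟨∅, isCompact_empty, fun χ _ => mapsTo_empty _ _⟩
  obtain ⟨n, hn⟩ := Circle.exists_setOf_re_pow_nonneg_subset (hV.mem_nhds (h1 hx₀))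
  refine ⟨⋃ j ∈ Iic n, (· ^ j) '' K,
    (finite_Iic n).isCompact_biUnion fun j _ => hK.image (continuous_pow j), ?_⟩
  intro χ hχ x hx
  exact hn fun j hj => map_pow χ x j ▸ hχ _ (mem_biUnion hj (mem_image_of_mem _ hx))

variable [ContinuousMul A]

theorem nhds_one_eq_iInf_polar :
    𝓝 (1 : PontryaginDual A) = ⨅ (K : Set A) (_ : IsCompact K), 𝓟 (polar K) := by
  refine le_antisymm (le_iInf₂ fun K hK => le_principal_iff.2 (polar_mem_nhds_one hK)) ?_
  rw [← tendsto_id']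
  refine (ContinuousMonoidHom.isInducing_toContinuousMap A Circle).tendsto_nhds_iff.2 ?_
  rw [ContinuousMap.tendsto_nhds_compactOpen]
  intro K hK V hV h1
  obtain ⟨K', hK', hsub⟩ := exists_polar_subset_setOf_mapsTo hK hV h1
  exact mem_iInf_of_mem K' (mem_iInf_of_mem hK' (mem_principal.2 hsub))

theorem hasBasis_nhds_one_polar : (𝓝 (1 : PontryaginDual A)).HasBasis IsCompact polar := by
  rw [nhds_one_eq_iInf_polar]
  refine hasBasis_biInf_principal' (fun K hK L hL => ⟨K ∪ L, hK.union hL, ?_, ?_⟩)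
    ⟨∅, isCompact_empty⟩
  · exact fun χ hχ x hx => hχ x (Or.inl hx)
  · exact fun χ hχ x hx => hχ x (Or.inr hx)

end PontryaginDual

open PontryaginDual

section

variable {G : Type*} [CommGroup G] [TopologicalSpace G]

noncomputable def Subgroup.dualRestrict (L : Subgroup G) : PontryaginDual G →ₜ* PontryaginDual L :=
  PontryaginDual.map ⟨L.subtype, continuous_subtype_val⟩

variable [IsTopologicalGroup G]

theorem annihilator_subset_polar {K S : Set G} (hKS : K ⊆ S) :
    (annihilator S : Set (PontryaginDual G)) ⊆ polar K := fun ψ hψ x hx => by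
  rw [hψ x (hKS hx)]
  simp

theorem Subgroup.ker_dualRestrict (L : Subgroup G) :
    L.dualRestrict.toMonoidHom.ker = annihilator (L : Set G) := by
  ext ψ
  exact MonoidHom.mem_ker.trans (ContinuousMonoidHom.ext_iff.trans Subtype.forall)

theorem DuallyEmbedded.surjective_dualRestrict {L : Subgroup G} (hL : DuallyEmbedded L) :
    Surjective L.dualRestrict := fun χ =>
  (hL χ).imp fun _ hψ => ContinuousMonoidHom.ext hψ

theorem DuallyEmbedded.exists_dualRestrict_factor {L : Subgroup G} (hL : DuallyEmbedded L)
    {K : Set G} (hK : IsCompact K) (hKL : K ⊆ L) (η : PontryaginDual G →* Circle)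
    (hη : ∀ ψ ∈ polar K, 0 ≤ ((η ψ : Circle) : ℂ).re) :
    ∃ η' : PontryaginDual (PontryaginDual L), ∀ ψ, η' (L.dualRestrict ψ) = η ψ := by
  set r := L.dualRestrict.toMonoidHom
  have hsurj : Surjective r := hL.surjective_dualRestrict
  have hker : r.ker ≤ η.ker := by
    rw [L.ker_dualRestrict]
    exact η.le_ker_of_re_nonneg fun ψ hψ => hη ψ (annihilator_subset_polar hKL hψ)
  set η₀ := r.liftOfSurjective hsurj ⟨η, hker⟩
  have hη₀ (ψ : PontryaginDual G) : η₀ (r ψ) = η ψ := r.liftOfRightInverse_comp_apply _ _ _ ψ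
  have hK' : IsCompact (((↑) : L → G) ⁻¹' K) :=
    IsInducing.subtypeVal.isCompact_preimage' hK (by simpa using hKL)
  refine ⟨⟨η₀, η₀.continuous_of_re_nonneg (polar_mem_nhds_one hK') fun χ hχ => ?_⟩, hη₀⟩
  obtain ⟨ψ, rfl⟩ := hsurj χ
  exact hη₀ ψ ▸ hη ψ fun x hx => hχ ⟨x, hKL hx⟩ hx

end

/-- if every compact subset of `G` is contained in a reflexive, dually
embedded subgroup, then the evaluation map `α_G` is surjective. -/
theorem statement2 (G : Type*) [CommGroup G] [TopologicalSpace G] [IsTopologicalGroup G]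
    (h : ∀ K : Set G, IsCompact K → ∃ L : Subgroup G, K ⊆ (L : Set G) ∧
      PontryaginReflexive L ∧ DuallyEmbedded L) :
    Function.Surjective (pontryaginEval G) := by
  intro η
  have hη : η ⁻¹' {w : Circle | 0 < (w : ℂ).re} ∈ 𝓝 (1 : PontryaginDual G) :=
    η.continuous.continuousAt.preimage_mem_nhds <| by
      simpa using Circle.isOpen_setOf_re_pos.mem_nhds (by simp)
  obtain ⟨K, hK, hKη⟩ := hasBasis_nhds_one_polar.mem_iff.1 hη
  obtain ⟨L, hKL, hLrefl, hLemb⟩ := h K hK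
  obtain ⟨η', hη'⟩ :=
    hLemb.exists_dualRestrict_factor hK hKL η.toMonoidHom fun ψ hψ => (hKη hψ).le
  obtain ⟨a, rfl⟩ := hLrefl.surjective η'
  exact ⟨a, ContinuousMonoidHom.ext hη'⟩
end

section
/- Let G be a precompact Hausdorff abelian group whose dual G^∧ (with the compact-open topology) is protodiscrete and has no infinite compact subsets. If G is reflexive, then every compact subset of G is contained in a compact subgroup of G. -/
open Pointwise Function

/-! Since `K` is compact, the characters mapping `K` into the open right half of the
circle form a neighbourhood of `1` in `G^∧`, which by protodiscreteness contains an open subgroup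
`N`. All powers of `χ x` (`χ ∈ N`, `x ∈ K`) then lie in that half circle, forcing `χ x = 1`; so `K`
lies in the preimage of `N^⊥` under the evaluation map. Now `N^⊥` is the dual of the discrete group
`G^∧ ⧸ N`, hence compact, and reflexivity pulls it back to a compact subgroup of `G`. -/

open Set Topology Real

theorem ContinuousMonoidHom.setOf_mapsTo_mem_nhds_one {A B : Type*} [Monoid A] [Monoid B]
    [TopologicalSpace A] [TopologicalSpace B] {K : Set A} (hK : IsCompact K) {U : Set B}
    (hU : IsOpen U) (hU1 : 1 ∈ U) : {f : A →ₜ* B | MapsTo f K U} ∈ 𝓝 1 :=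
  (isOpen_induced (ContinuousMap.isOpen_setOfPred_mapsTo hK hU)).mem_nhds fun _ _ => hU1

theorem Circle.one_mem_centeredArc {r : ℝ} (hr : 0 < r) : (1 : Circle) ∈ Circle.centeredArc r :=
  ⟨0, by simpa using hr, Circle.exp_zero⟩

theorem le_annihilator_of_forall_mapsTo_centeredArc {G : Type*} [CommGroup G] [TopologicalSpace G]
    [IsTopologicalGroup G] {K : Set G} {N : Subgroup (PontryaginDual G)}
    (hN : ∀ χ ∈ N, MapsTo χ K (Circle.centeredArc (π / 2))) : N ≤ annihilator K :=
  fun χ hχ x hx => Circle.eq_one_of_forall_pow_mem_centeredArc_pi_div_two fun n _ =>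
    ContinuousMonoidHom.pow_apply χ n x ▸ hN (χ ^ n) (pow_mem hχ n) hx

theorem Protodiscrete.exists_isOpen_le_annihilator {G : Type*} [CommGroup G] [TopologicalSpace G]
    [IsTopologicalGroup G] (hG : Protodiscrete (PontryaginDual G)) {K : Set G}
    (hK : IsCompact K) :
    ∃ N : Subgroup (PontryaginDual G), IsOpen (N : Set (PontryaginDual G)) ∧
      N ≤ annihilator K := by
  obtain ⟨N, hNopen, hNK⟩ := hG _ (ContinuousMonoidHom.setOf_mapsTo_mem_nhds_one hK
    (Circle.isOpen_centeredArc (π / 2)) (Circle.one_mem_centeredArc (by positivity)))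
  exact ⟨N, hNopen, le_annihilator_of_forall_mapsTo_centeredArc fun χ hχ => hNK hχ⟩

theorem PontryaginDual.range_map_mk_eq_annihilator {H : Type*} [CommGroup H] [TopologicalSpace H]
    [IsTopologicalGroup H] (N : Subgroup H) :
    range (PontryaginDual.map
        (⟨QuotientGroup.mk' N, continuous_quot_mk⟩ : H →ₜ* H ⧸ N)) =
      annihilator (N : Set H) := by
  ext ψ
  constructor
  · rintro ⟨χ, rfl⟩ x hx
    change χ (x : H ⧸ N) = 1
    rw [(QuotientGroup.eq_one_iff x).mpr hx, _root_.map_one]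
  · intro hψ
    exact ⟨⟨QuotientGroup.lift N ψ.toMonoidHom hψ,
      (QuotientGroup.isQuotientMap_mk N).continuous_iff.mpr ψ.continuous⟩, rfl⟩

theorem isCompact_annihilator_of_isOpen {H : Type*} [CommGroup H] [TopologicalSpace H]
    [IsTopologicalGroup H] {N : Subgroup H} (hN : IsOpen (N : Set H)) :
    IsCompact (annihilator (N : Set H) : Set (PontryaginDual H)) := by
  have := QuotientGroup.discreteTopology hN
  rw [← PontryaginDual.range_map_mk_eq_annihilator]
  exact isCompact_range (PontryaginDual.map _).continuous

theorem statement4_general (G : Type*) [CommGroup G] [TopologicalSpace G] [IsTopologicalGroup G]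
    (hproto : Protodiscrete (PontryaginDual G))
    (href : PontryaginReflexive G) :
    ∀ K : Set G, IsCompact K → ∃ C : Subgroup G, IsCompact (C : Set G) ∧ K ⊆ C := by
  intro K hK
  obtain ⟨N, hNopen, hNK⟩ := hproto.exists_isOpen_le_annihilator hK
  refine ⟨(annihilator (N : Set (PontryaginDual G))).comap (pontryaginEval G), ?_,
    fun x hx χ hχ => hNK hχ x hx⟩
  exact (href.homeomorph _).isCompact_preimage.mpr (isCompact_annihilator_of_isOpen hNopen)

/-- if `G` is precompact Hausdorff, its dual is protodiscrete with no
infinite compact subsets, and `G` is reflexive, then every compact subset of `G` is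
contained in a compact subgroup. -/
theorem statement4 (G : Type*) [CommGroup G] [TopologicalSpace G] [IsTopologicalGroup G]
    [T2Space G] (hpre : Precompact G)
    (hproto : Protodiscrete (PontryaginDual G))
    (hnic : ∀ K : Set (PontryaginDual G), IsCompact K → K.Finite)
    (href : PontryaginReflexive G) :
    ∀ K : Set G, IsCompact K → ∃ C : Subgroup G, IsCompact (C : Set G) ∧ K ⊆ C :=
  statement4_general G hproto href
end

section
/- Let G be a Hausdorff abelian topological group and H a closed subgroup. If both H and the quotient G/H are protodiscrete, then G is protodiscrete. -/
open Pointwise Function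

/-!
Given a neighbourhood `U` of `1`, choose `W₀` with `W₀ * W₀ ⊆ U`, an open subgroup `A` of `H`
inside `W₀`, a symmetric neighbourhood `W` whose triple products meet `H` only inside `A`, and an
open subgroup `C` of `G ⧸ H` inside the image of `W`. Then `(W ∩ π⁻¹ C) * A` is an open subgroup
of `G` contained in `W₀ * W₀ ⊆ U`: if `w, w' ∈ W ∩ π⁻¹ C`, then `π (w * w') = π v` for some `v ∈ W`,
and `v⁻¹ * w * w'` lies in `W * W * W ∩ H ⊆ A`; commutativity lets the `A`-factors be collected.
-/

open Pointwise Topology Filter Set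

theorem exists_nhds_one_inv_eq_mul_mul_subset {G : Type*} [Group G] [TopologicalSpace G]
    [IsTopologicalGroup G] {U : Set G} (hU : U ∈ 𝓝 1) :
    ∃ W ∈ 𝓝 (1 : G), W⁻¹ = W ∧ W * W * W ⊆ U := by
  obtain ⟨V, hV, -, -, hVU⟩ := exists_closed_nhds_one_inv_eq_mul_subset hU
  obtain ⟨W, hW, -, hWinv, hWV⟩ := exists_closed_nhds_one_inv_eq_mul_subset hV
  have hW_sub : W ⊆ V := (subset_mul_left W (mem_of_mem_nhds hW)).trans hWV
  exact ⟨W, hW, hWinv, (mul_subset_mul hWV hW_sub).trans hVU⟩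

theorem Protodiscrete.exists_subgroup_subset_of_mem_nhds {G : Type*} [Group G]
    [TopologicalSpace G] {H : Subgroup G} (hH : Protodiscrete H) {U : Set G}
    (hU : U ∈ 𝓝 (1 : G)) :
    ∃ A : Subgroup G, (A : Set G) ⊆ U ∧ ∃ N ∈ 𝓝 (1 : G), N ∩ H ⊆ A := by
  obtain ⟨V, hVo, hVU⟩ := hH _ (continuous_subtype_val.continuousAt.preimage_mem_nhds hU)
  obtain ⟨N, hN, hNV⟩ := (mem_nhds_subtype _ _ _).mp (hVo.mem_nhds V.one_mem)
  refine ⟨V.map H.subtype, ?_, N, hN, ?_⟩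
  · rintro _ ⟨x, hx, rfl⟩
    exact hVU hx
  · rintro x ⟨hxN, hxH⟩
    exact ⟨⟨x, hxH⟩, hNV hxN, rfl⟩

theorem exists_subgroup_inter_mk_preimage_subset_subset_mul {G : Type*} [CommGroup G]
    {H A : Subgroup G} {W : Set G} (hW1 : 1 ∈ W) (hWinv : W⁻¹ = W)
    (hWA : W * W * W ∩ H ⊆ A) {C : Subgroup (G ⧸ H)}
    (hCW : (C : Set (G ⧸ H)) ⊆ (↑) '' W) :
    ∃ K : Subgroup G, W ∩ (↑) ⁻¹' (C : Set (G ⧸ H)) ⊆ K ∧ (K : Set G) ⊆ W * A := by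
  have hinv : ∀ w ∈ W, w⁻¹ ∈ W := fun w hw => hWinv ▸ inv_mem_inv.mpr hw
  let K : Subgroup G :=
    { carrier := (W ∩ (↑) ⁻¹' (C : Set (G ⧸ H))) * A
      one_mem' := ⟨1, ⟨hW1, C.one_mem⟩, 1, A.one_mem, one_mul 1⟩
      mul_mem' := by
        rintro _ _ ⟨w, ⟨hw, hwC⟩, a, ha, rfl⟩ ⟨w', ⟨hw', hw'C⟩, a', ha', rfl⟩
        have hC : ((w * w' : G) : G ⧸ H) ∈ C := C.mul_mem hwC hw'C
        obtain ⟨v, hv, hvww⟩ := hCW hC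
        have hA : v⁻¹ * (w * w') ∈ A := by
          refine hWA ⟨?_, QuotientGroup.eq.mp hvww⟩
          rw [← mul_assoc]
          exact mul_mem_mul (mul_mem_mul (hinv v hv) hw) hw'
        refine ⟨v, ⟨hv, by rwa [mem_preimage, hvww]⟩, v⁻¹ * (w * w') * (a * a'),
          A.mul_mem hA (A.mul_mem ha ha'), ?_⟩
        show v * _ = w * a * (w' * a')
        rw [mul_assoc v⁻¹, mul_inv_cancel_left, mul_mul_mul_comm]
      inv_mem' := by
        rintro _ ⟨w, ⟨hw, hwC⟩, a, ha, rfl⟩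
        exact ⟨w⁻¹, ⟨hinv w hw, C.inv_mem hwC⟩, a⁻¹, A.inv_mem ha, (mul_inv w a).symm⟩ }
  exact ⟨K, fun x hx => ⟨x, hx, 1, A.one_mem, mul_one x⟩,
    mul_subset_mul_right inter_subset_left⟩

theorem statement8_general (G : Type*) [CommGroup G] [TopologicalSpace G] [IsTopologicalGroup G]
    (H : Subgroup G)
    (h1 : Protodiscrete H) (h2 : Protodiscrete (G ⧸ H)) :
    Protodiscrete G := by
  intro U hU
  obtain ⟨W₀, hW₀, hW₀U⟩ := exists_nhds_one_split hU
  obtain ⟨A, hAW₀, N, hN, hNA⟩ := h1.exists_subgroup_subset_of_mem_nhds hW₀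
  obtain ⟨W, hW, hWinv, hWWW⟩ := exists_nhds_one_inv_eq_mul_mul_subset (inter_mem hN hW₀)
  have hW1 : (1 : G) ∈ W := mem_of_mem_nhds hW
  have hWW₀ : W ⊆ W₀ :=
    ((subset_mul_left _ hW1).trans (subset_mul_left _ hW1)).trans (hWWW.trans inter_subset_right)
  obtain ⟨C, hCo, hCW⟩ := h2 _ (QuotientGroup.isOpenMap_coe.image_mem_nhds hW)
  obtain ⟨K, hSK, hKWA⟩ := exists_subgroup_inter_mk_preimage_subset_subset_mul (A := A) hW1 hWinv
    (fun x ⟨hxW, hxH⟩ => hNA ⟨(hWWW hxW).1, hxH⟩) hCW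
  have hS : W ∩ (↑) ⁻¹' (C : Set (G ⧸ H)) ∈ 𝓝 (1 : G) :=
    inter_mem hW ((hCo.preimage QuotientGroup.continuous_mk).mem_nhds C.one_mem)
  refine ⟨K, K.isOpen_of_mem_nhds (mem_of_superset hS hSK), fun x hx => ?_⟩
  obtain ⟨w, hw, a, ha, rfl⟩ := hKWA hx
  exact hW₀U w (hWW₀ hw) a (hAW₀ ha)

/-- an extension of a protodiscrete abelian group by a protodiscrete group
is protodiscrete. -/
theorem statement8 (G : Type*) [CommGroup G] [TopologicalSpace G] [IsTopologicalGroup G]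
    [T2Space G] (H : Subgroup G) (hH : IsClosed (H : Set G))
    (h1 : Protodiscrete H) (h2 : Protodiscrete (G ⧸ H)) :
    Protodiscrete G :=
  statement8_general G H h1 h2
end

section
/- Let D be an infinite set and Σ𝕋^D = {x ∈ 𝕋^D : x(d) = 1 for all but countably many d} be the Σ-product of circles, with the topology inherited from the product 𝕋^D. Then the Pontryagin dual of Σ𝕋^D (with the compact-open topology) is discrete. -/
open Pointwise Function

section aux14


/-!
The set `K` of points of `Σ𝕋^D` with at most one coordinate different from `1` is closed in the
compact group `𝕋^D` and lies in `Σ𝕋^D`, so it is compact. A character mapping `K` into the right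
half-circle maps each coordinate circle, a subgroup contained in `K`, to a subgroup of `𝕋` inside
the right half-circle; as `𝕋` has no small subgroups, it kills every coordinate circle. Finite
products of coordinate vectors converge to every point of `Σ𝕋^D`, so the character is trivial.
Hence `{1}` is the compact-open neighbourhood `{χ | χ(K) ⊆ 𝕋₊}` of `1`.
-/

open Set Function Real

lemma exists_nat_cos_nat_mul_nonpos {θ : ℝ} (h0 : θ ≠ 0) (hπ : |θ| ≤ π) :
    ∃ n : ℕ, cos (n * θ) ≤ 0 := by
  have hpos : 0 < |θ| := abs_pos.2 h0
  refine ⟨⌈π / 2 / |θ|⌉₊, ?_⟩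
  rw [← cos_abs, abs_mul, Nat.abs_cast]
  apply cos_nonpos_of_pi_div_two_le_of_le
  · exact (div_le_iff₀ hpos).1 (Nat.le_ceil _)
  · have hlt := mul_lt_mul_of_pos_right
      (Nat.ceil_lt_add_one (div_nonneg (div_nonneg pi_pos.le two_pos.le) hpos.le)) hpos
    rw [add_mul, div_mul_cancel₀ _ hpos.ne', one_mul] at hlt
    linarith

lemma Circle.eq_one_of_forall_re_pow_pos {z : Circle}
    (h : ∀ n : ℕ, 0 < ((z ^ n : Circle) : ℂ).re) : z = 1 := by
  by_contra hz
  have harg : Complex.arg z ≠ 0 := fun h0 => hz (by rw [← Circle.exp_arg z, h0, Circle.exp_zero])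
  obtain ⟨n, hn⟩ := exists_nat_cos_nat_mul_nonpos harg (Complex.abs_arg_le_pi z)
  have hre : ((z ^ n : Circle) : ℂ).re = cos (n * Complex.arg z) := by
    rw [← Circle.exp_arg z, ← Circle.exp_nsmul, Circle.exp_arg, nsmul_eq_mul, Circle.coe_exp,
      Complex.exp_ofReal_mul_I_re]
  linarith [h n]

lemma isClosed_setOf_mulSupport_subsingleton (D M : Type*) [One M] [TopologicalSpace M]
    [T1Space M] : IsClosed {g : D → M | (mulSupport g).Subsingleton} := by
  have heq : {g : D → M | (mulSupport g).Subsingleton} =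
      ⋂ (d₁ : D) (d₂ : D) (_ : d₁ ≠ d₂), {g | g d₁ = 1} ∪ {g | g d₂ = 1} := by
    ext g
    simp only [Set.Subsingleton, mem_mulSupport, mem_ofPred_eq, mem_iInter, mem_union]
    grind
  rw [heq]
  exact isClosed_iInter fun d₁ => isClosed_iInter fun d₂ => isClosed_iInter fun _ =>
    (isClosed_singleton.preimage (continuous_apply d₁)).union
      (isClosed_singleton.preimage (continuous_apply d₂))

lemma ContinuousMonoidHom.isOpen_setOf_mapsTo {A B : Type*} [Monoid A] [Monoid B]
    [TopologicalSpace A] [TopologicalSpace B] {K : Set A} {U : Set B} (hK : IsCompact K)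
    (hU : IsOpen U) : IsOpen {χ : ContinuousMonoidHom A B | MapsTo χ K U} :=
  (ContinuousMap.isOpen_setOfPred_mapsTo hK hU).preimage
    (ContinuousMonoidHom.isInducing_toContinuousMap A B).continuous

namespace sigmaProd

variable (D : Type*)

def axes : Set (sigmaProd D) := (↑) ⁻¹' {g : D → Circle | (mulSupport g).Subsingleton}

lemma isCompact_axes : IsCompact (axes D) := by
  rw [Subtype.isCompact_iff]
  have himage : (↑) '' axes D = {g : D → Circle | (mulSupport g).Subsingleton} :=
    image_preimage_eq_of_subset fun g hg => ⟨⟨g, hg.countable⟩, rfl⟩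
  rw [himage]
  exact (isClosed_setOf_mulSupport_subsingleton D Circle).isCompact

variable {D} [DecidableEq D]

noncomputable def single (d : D) : Circle →* sigmaProd D :=
  (MonoidHom.mulSingle (fun _ : D => Circle) d).codRestrict (sigmaProd D) fun _ =>
    (countable_singleton d).mono Pi.mulSupport_mulSingle_subset

lemma single_mem_axes (d : D) (x : Circle) : single d x ∈ axes D :=
  subsingleton_singleton.anti Pi.mulSupport_mulSingle_subset

lemma hasProd_single (y : sigmaProd D) : HasProd (fun d => single d ((y : D → Circle) d)) y := by
  rw [← Topology.IsInducing.subtypeVal.hasProd_iff (g := (sigmaProd D).subtype)]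
  refine Pi.hasProd.2 fun d' => ?_
  show HasProd (fun d => Pi.mulSingle d ((y : D → Circle) d) d') ((y : D → Circle) d')
  convert hasProd_pi_single (α := Circle) d' ((y : D → Circle) d') using 1
  ext d
  rcases eq_or_ne d d' with rfl | h
  · simp
  · simp [h, h.symm]

lemma eq_one_of_map_single {M : Type*} [CommMonoid M] [TopologicalSpace M] [T2Space M]
    (χ : ContinuousMonoidHom (sigmaProd D) M) (hχ : ∀ d x, χ (single d x) = 1) : χ = 1 := by
  ext y
  have hy := (hasProd_single y).map χ χ.continuous
  simp only [comp_def, hχ] at hy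
  exact hy.unique hasProd_one

omit [DecidableEq D] in
lemma eq_one_of_mapsTo_axes (χ : ContinuousMonoidHom (sigmaProd D) Circle)
    (hχ : MapsTo χ (axes D) {z | 0 < (z : ℂ).re}) : χ = 1 := by
  classical
  refine eq_one_of_map_single χ fun d x => Circle.eq_one_of_forall_re_pow_pos fun n => ?_
  rw [← map_pow, ← map_pow]
  exact hχ (single_mem_axes d _)

end sigmaProd

theorem statement14_general (D : Type*) :
    DiscreteTopology (PontryaginDual (sigmaProd D)) := by
  let U : Set Circle := {z | 0 < (z : ℂ).re}
  have hU : IsOpen U :=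
    isOpen_lt continuous_const (Complex.continuous_re.comp continuous_subtype_val)
  have hone : {1} = {χ : PontryaginDual (sigmaProd D) | MapsTo χ (sigmaProd.axes D) U} := by
    ext χ
    constructor
    · rintro rfl _ _
      simp [U]
    · exact sigmaProd.eq_one_of_mapsTo_axes χ
  rw [discreteTopology_iff_isOpen_singleton_one, hone]
  exact ContinuousMonoidHom.isOpen_setOf_mapsTo (sigmaProd.isCompact_axes D) hU

/-- the Pontryagin dual of the Σ-product of circles is discrete. -/
theorem statement14 (D : Type*) [Infinite D] :
    DiscreteTopology (PontryaginDual (sigmaProd D)) :=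
  statement14_general D
end aux14
end

section
/- Let Y be the one-point Lindelöfication of an uncountable discrete set D. Then the topological group C_p(Y, 𝕋) is not reflexive: its Pontryagin dual is discrete, its bidual is the compact group 𝕋 × 𝕋^D, but C_p(Y, 𝕋) itself is a proper dense non-compact subgroup of 𝕋^Y. -/
open Pointwise Function

/-!
A continuous character of `C_p(Y, 𝕋)` only sees finitely many coordinates, and the continuous
characters of `𝕋` are the powers `z ↦ z ^ n`; together these show that the dual is generated by
the evaluations `f ↦ f y`. The functions that differ from their value at `∞ = none` in at most one
point form a compact set `K` (closed in `𝕋^Y`), closed under powers, that generates a dense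
subgroup. A character mapping `K` into the open right half circle kills `K`, hence is trivial,
so `{1}` is open in the dual. The bidual is then compact, and evaluation at the generators
embeds it into `𝕋^Y ≅ 𝕋 × 𝕋^D` with closed image containing the dense subgroup `C_p(Y, 𝕋)`.
Finally a function with uncountably many values different from its value at `∞` is
discontinuous, so `C_p(Y, 𝕋)` is a proper dense subgroup of `𝕋^Y`: it is not closed, hence
not compact, hence not isomorphic to its compact bidual.
-/

open Real Topology

theorem Circle.one_mem_centeredArc_s18 : (1 : Circle) ∈ Circle.centeredArc (π / 2) :=
  ⟨0, by simp [pi_pos], Circle.exp_zero⟩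

theorem Circle.exists_zpow_eq (φ : Circle →ₜ* Circle) : ∃ n : ℤ, ∀ z, φ z = z ^ n := by
  let ψ : C(ℝ, Circle) := ⟨fun t => φ (Circle.exp t), by fun_prop⟩
  obtain ⟨L, ⟨-, hL⟩, hL_unique⟩ :=
    Circle.isCoveringMap_exp.existsUnique_continuousMap_lifts ψ 0 0 (by simp [ψ])
  have hLψ (t : ℝ) : Circle.exp (L t) = φ (Circle.exp t) := congrFun hL t
  -- `t ↦ L (s + t) - L s` is another lift of `ψ` through `Circle.exp` vanishing at `0`
  have hL_add (s t : ℝ) : L (s + t) = L s + L t := by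
    let L' : C(ℝ, ℝ) := ⟨fun t => L (s + t) - L s, by fun_prop⟩
    have hL' : L' = L := hL_unique L' ⟨by simp [L'], funext fun t => by
      simp [L', ψ, Circle.exp_sub, hLψ, Circle.exp_add]⟩
    have := congrArg (· t) hL'
    simp only [L', ContinuousMap.coe_mk] at this
    linarith
  have hL_lin (t : ℝ) : L t = t * L 1 := by
    simpa using map_real_smul (AddMonoidHom.mk' L hL_add) L.continuous t 1
  obtain ⟨n, hn⟩ := Circle.exp_eq_one.mp (show Circle.exp (L (2 * π)) = 1 by simp [hLψ])
  have hL_one : L 1 = n := by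
    rw [hL_lin] at hn
    nlinarith [pi_pos]
  refine ⟨n, fun z => ?_⟩
  rw [← Circle.exp_arg z, ← hLψ, hL_lin, hL_one, mul_comm, Circle.exp_intCast_mul]

theorem MulEquiv.continuous_symm_of_compactSpace {M N : Type*} [Mul M] [Mul N]
    [TopologicalSpace M] [TopologicalSpace N] [CompactSpace M] [T2Space N] (e : M ≃* N)
    (he : Continuous e) : Continuous e.symm :=
  (he.homeoOfEquivCompactToT2 (f := e.toEquiv)).symm.continuous

def MulEquiv.piOptionEquivProd {α M : Type*} [Mul M] : (Option α → M) ≃* M × (α → M) :=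
  { Equiv.piOptionEquivProd with map_mul' := fun _ _ => rfl }

theorem MulEquiv.continuous_piOptionEquivProd {α M : Type*} [Mul M] [TopologicalSpace M] :
    Continuous (MulEquiv.piOptionEquivProd (α := α) (M := M)) :=
  (continuous_apply none).prodMk (continuous_pi fun a => continuous_apply (some a))

namespace PontryaginDual

variable {G : Type*} [Group G] [TopologicalSpace G]

theorem eq_one_of_dense_closure {S : Set G} (hS : Dense (Subgroup.closure S : Set G))
    {χ : PontryaginDual G} (hχ : ∀ x ∈ S, χ x = 1) : χ = 1 := by
  have hker : Subgroup.closure S ≤ χ.toMonoidHom.ker := (Subgroup.closure_le _).mpr hχ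
  exact DFunLike.coe_injective <|
    Continuous.ext_on hS χ.continuous continuous_const fun x hx => hker hx

theorem discreteTopology_of_isCompact {K : Set G} (hK : IsCompact K)
    (hpow : ∀ x ∈ K, ∀ n : ℕ, x ^ n ∈ K) (hdense : Dense (Subgroup.closure K : Set G)) :
    DiscreteTopology (PontryaginDual G) := by
  let V : Set (PontryaginDual G) := {χ | Set.MapsTo χ K (Circle.centeredArc (π / 2))}
  have hV_open : IsOpen V :=
    isOpen_induced (ContinuousMap.isOpen_setOfPred_mapsTo hK (Circle.isOpen_centeredArc _))
  have hV : V = {1} := by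
    refine Set.eq_singleton_iff_unique_mem.mpr
      ⟨fun _ _ => Circle.one_mem_centeredArc_s18, fun χ hχ => ?_⟩
    refine eq_one_of_dense_closure hdense fun x hx => ?_
    refine Circle.eq_one_of_forall_pow_mem_centeredArc_pi_div_two fun n _ => ?_
    simpa using hχ (hpow x hx n)
  exact discreteTopology_of_isOpen_singleton_one (hV ▸ hV_open)

theorem exists_finset_forall_eq_one {Y A : Type*} [Group A] [TopologicalSpace A]
    (H : Subgroup (Y → A)) (χ : PontryaginDual H) :
    ∃ I : Finset Y, ∀ f : H, (∀ y ∈ I, (f : Y → A) y = 1) → χ f = 1 := by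
  have hW : χ ⁻¹' Circle.centeredArc (π / 2) ∈ 𝓝 (1 : H) :=
    χ.continuous.continuousAt.preimage_mem_nhds <| by
      simpa using (Circle.isOpen_centeredArc _).mem_nhds Circle.one_mem_centeredArc_s18
  rw [nhds_subtype_eq_comap, Filter.mem_comap] at hW
  obtain ⟨W, hW, hW_sub⟩ := hW
  rw [nhds_pi, Filter.mem_pi'] at hW
  obtain ⟨I, t, ht, hIt⟩ := hW
  -- the functions trivial on `I` form a subgroup that `χ` maps into the half circle
  refine ⟨I, fun f hf => Circle.eq_one_of_forall_pow_mem_centeredArc_pi_div_two fun n _ => ?_⟩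
  rw [← map_pow]
  refine hW_sub (hIt fun y hy => ?_)
  simpa [hf y hy] using mem_of_mem_nhds (ht y)

theorem div_zpow_apply {G : Type*} [CommGroup G] [TopologicalSpace G] [IsTopologicalGroup G]
    (χ ψ : PontryaginDual G) (n : ℤ) (x : G) : (χ / ψ ^ n) x = χ x / ψ x ^ n :=
  (map_div (pontryaginEval G x) _ _).trans (congrArg _ (map_zpow (pontryaginEval G x) ψ n))

end PontryaginDual

theorem PontryaginReflexive.compactSpace {G : Type*} [CommGroup G] [TopologicalSpace G]
    [IsTopologicalGroup G] [DiscreteTopology (PontryaginDual G)] (h : PontryaginReflexive G) :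
    CompactSpace G :=
  (h.homeomorph _).symm.compactSpace

namespace Cp

variable {Y : Type*} [TopologicalSpace Y]

noncomputable def eval (y : Y) : PontryaginDual (Cp Y) where
  toFun f := (f : Y → Circle) y
  map_one' := rfl
  map_mul' _ _ := rfl
  continuous_toFun := (continuous_apply y).comp continuous_subtype_val

noncomputable def bidualToPi : PontryaginDual (PontryaginDual (Cp Y)) →* (Y → Circle) where
  toFun Φ y := Φ (eval y)
  map_one' := rfl
  map_mul' _ _ := rfl

theorem continuous_bidualToPi : Continuous (bidualToPi (Y := Y)) :=
  continuous_pi fun y =>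
    (continuous_eval_const (F := ContinuousMonoidHom (PontryaginDual (Cp Y)) Circle) (eval y) :)

theorem bidualToPi_injective (hgen : Subgroup.closure (Set.range (eval (Y := Y))) = ⊤) :
    Injective (bidualToPi (Y := Y)) :=
  (injective_iff_map_eq_one _).mpr fun _ hΦ => ContinuousMonoidHom.toMonoidHom_injective <|
    MonoidHom.eq_of_eqOn_dense hgen fun _ ⟨y, hy⟩ => hy ▸ congrFun hΦ y

theorem bidualToPi_surjective [DiscreteTopology (PontryaginDual (Cp Y))]
    (hdense : Dense (Cp Y : Set (Y → Circle))) : Surjective (bidualToPi (Y := Y)) := by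
  have hclosed : IsClosed (Set.range (bidualToPi (Y := Y))) :=
    (isCompact_range continuous_bidualToPi).isClosed
  have hsub : (Cp Y : Set (Y → Circle)) ⊆ Set.range bidualToPi :=
    fun f hf => ⟨pontryaginEval _ ⟨f, hf⟩, rfl⟩
  exact Set.range_eq_univ.mp <| hclosed.closure_eq.symm.trans (hdense.mono hsub).closure_eq

end Cp

namespace Lind

variable {D X : Type*}

def deviation (f : Lind D → X) : Set D := {d | f (some d) ≠ f none}

theorem continuous_of_countable_deviation [TopologicalSpace X] {f : Lind D → X}
    (hf : (deviation f).Countable) : Continuous f :=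
  continuous_def.mpr fun _ _ hnone =>
    hf.mono fun d hd (hdev : f (some d) = f none) =>
      hd (Set.mem_preimage.mpr (Set.mem_of_eq_of_mem hdev (Set.mem_preimage.mp hnone)))

theorem countable_deviation_of_continuous [TopologicalSpace X] [FirstCountableTopology X]
    [T1Space X] {f : Lind D → X} (hf : Continuous f) : (deviation f).Countable := by
  obtain ⟨T, hT_open, hT_count, hT⟩ := IsGδ.singleton (f none)
  have hf_none : f none ∈ ⋂₀ T := hT ▸ Set.mem_singleton _
  refine (hT_count.biUnion fun t ht => (hT_open t ht).preimage hf (hf_none t ht)).mono ?_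
  intro d hd
  have : f (some d) ∉ ⋂₀ T := hT ▸ hd
  obtain ⟨t, ht, hdt⟩ := by simpa using this
  exact Set.mem_biUnion ht hdt

theorem dense_setOf_finite_deviation [TopologicalSpace X] :
    Dense {f : Lind D → X | (deviation f).Finite} := by
  classical
  refine dense_iff_inter_open.mpr fun U hU ⟨g, hg⟩ => ?_
  obtain ⟨I, u, hu, hIu⟩ := isOpen_pi_iff.mp hU g hg
  refine ⟨fun y => if y ∈ I then g y else g none, hIu fun y hy => ?_, ?_⟩
  · simpa [Finset.mem_coe.mp hy] using (hu y hy).2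
  · refine (I.finite_toSet.preimage (Option.some_injective D).injOn).subset fun d hd => ?_
    by_contra h
    have h' : some d ∉ I := h
    simp only [deviation, Set.mem_ofPred_eq, ite_self] at hd
    exact hd (if_neg h')

theorem isClosed_setOf_deviation_subsingleton [TopologicalSpace X] [T2Space X] :
    IsClosed {f : Lind D → X | (deviation f).Subsingleton} := by
  have hset : {f : Lind D → X | (deviation f).Subsingleton} = ⋂ (d₁ : D) (d₂ : D),
      {f | f (some d₁) ≠ f none → f (some d₂) ≠ f none → d₁ = d₂} := by
    ext f
    simp only [Set.mem_iInter, Set.mem_ofPred_eq, Set.Subsingleton, deviation]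
    exact ⟨fun h _ _ h₁ h₂ => h h₁ h₂, fun h _ h₁ _ h₂ => h _ _ h₁ h₂⟩
  have hne (d : D) : IsOpen {f : Lind D → X | f (some d) ≠ f none} :=
    isOpen_ne_fun (continuous_apply _) (continuous_apply _)
  rw [hset]
  exact isClosed_iInter fun d₁ => isClosed_iInter fun d₂ =>
    isClosed_imp (hne d₁) (isClosed_imp (hne d₂) isClosed_const)

theorem dense_Cp : Dense (Cp (Lind D) : Set (Lind D → Circle)) :=
  dense_setOf_finite_deviation.mono fun _ hf => continuous_of_countable_deviation hf.countable

theorem Cp_ne_top [Uncountable D] : Cp (Lind D) ≠ ⊤ := by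
  intro htop
  let f : Lind D → Circle := fun y => Option.elim y (Circle.exp π) fun _ => 1
  have hf : f ∈ Cp (Lind D) := htop ▸ Subgroup.mem_top f
  have hdev : deviation f = Set.univ :=
    Set.eq_univ_of_forall fun _ => Circle.exp_pi_ne_one.symm
  exact not_countable (Set.countable_univ_iff.mp (hdev ▸ countable_deviation_of_continuous hf))

theorem not_isCompact_Cp [Uncountable D] : ¬ IsCompact (Cp (Lind D) : Set (Lind D → Circle)) :=
  fun h => Cp_ne_top <| SetLike.coe_injective <| by
    rw [Subgroup.coe_top, ← h.isClosed.closure_eq, dense_Cp.closure_eq]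

section Generators

open scoped Classical

noncomputable def const : Circle →ₜ* Cp (Lind D) where
  toFun c := ⟨Function.const _ c, continuous_const⟩
  map_one' := rfl
  map_mul' _ _ := rfl
  continuous_toFun := (continuous_pi fun _ => continuous_id).subtype_mk _

theorem deviation_elim_mulSingle_subset [One X] (d : D) (x : X) :
    deviation (fun y : Lind D => Option.elim y 1 (Pi.mulSingle d x)) ⊆ {d} := fun d' hd' => by
  by_contra h
  exact hd' (Pi.mulSingle_eq_of_ne (M := fun _ => X) h x)

noncomputable def delta (d : D) : Circle →ₜ* Cp (Lind D) where
  toFun z := ⟨fun y => Option.elim y 1 (Pi.mulSingle d z), continuous_of_countable_deviation <|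
    (Set.countable_singleton d).mono (deviation_elim_mulSingle_subset d z)⟩
  map_one' := Subtype.ext <| funext fun y => by
    cases y with
    | none => rfl
    | some d' => exact congrFun (Pi.mulSingle_one (M := fun _ => Circle) d) d'
  map_mul' z w := Subtype.ext <| funext fun y => by
    cases y with
    | none => exact (mul_one 1).symm
    | some d' => exact congrFun (Pi.mulSingle_mul (f := fun _ => Circle) d z w) d'
  continuous_toFun := by
    refine Continuous.subtype_mk (continuous_pi fun y => ?_) _
    cases y with
    | none => exact continuous_const
    | some d' =>
      exact (continuous_apply d').comp (continuous_mulSingle (A := fun _ : D => Circle) d)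

def constsAndDeltas : Set (Cp (Lind D)) := Set.range const ∪ ⋃ d, Set.range (delta d)

theorem mem_closure_constsAndDeltas_of_deviation_subset (F : Finset D) (f : Cp (Lind D))
    (hf : deviation (f : Lind D → Circle) ⊆ F) : f ∈ Subgroup.closure constsAndDeltas := by
  induction F using Finset.induction_on generalizing f with
  | empty =>
    have hf_const : f = const ((f : Lind D → Circle) none) := by
      refine Subtype.ext (funext fun y => ?_)
      cases y with
      | none => rfl
      | some d => exact not_not.mp fun h => by simpa using hf h
    exact hf_const ▸ Subgroup.subset_closure (Or.inl ⟨_, rfl⟩)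
  | insert d F _ ih =>
    let v := (f : Lind D → Circle) (some d) / (f : Lind D → Circle) none
    let δ := delta d v
    have hδ : δ ∈ constsAndDeltas := Or.inr (Set.mem_iUnion.mpr ⟨d, _, rfl⟩)
    refine mul_inv_cancel_left δ f ▸ mul_mem (Subgroup.subset_closure hδ) (ih _ fun d' hd' => ?_)
    change ((Pi.mulSingle d v : D → Circle) d')⁻¹ * (f : Lind D → Circle) (some d') ≠
      1⁻¹ * (f : Lind D → Circle) none at hd'
    by_cases hd'd : d' = d
    · subst hd'd
      exact absurd (by simp [v]) hd'
    · have : d' ∈ insert d F := hf (by simpa [deviation, hd'd] using hd')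
      simpa [hd'd] using this

theorem dense_closure_constsAndDeltas :
    Dense ((Subgroup.closure constsAndDeltas : Subgroup (Cp (Lind D))) : Set (Cp (Lind D))) :=
  Subtype.dense_iff.mpr fun f _ => by
    refine closure_mono (fun g hg => ?_) (dense_setOf_finite_deviation f)
    obtain ⟨F, hF⟩ := hg.exists_finset_coe
    exact ⟨⟨g, continuous_of_countable_deviation hg.countable⟩,
      mem_closure_constsAndDeltas_of_deviation_subset F _ hF.ge, rfl⟩

theorem isCompact_setOf_deviation_subsingleton :
    IsCompact {f : Cp (Lind D) | (deviation (f : Lind D → Circle)).Subsingleton} := by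
  refine Subtype.isCompact_iff.mpr ?_
  change IsCompact (Subtype.val '' (Subtype.val ⁻¹' {f | (deviation f).Subsingleton}))
  rw [Set.image_preimage_eq_of_subset fun f hf =>
    ⟨⟨f, continuous_of_countable_deviation hf.countable⟩, rfl⟩]
  exact isClosed_setOf_deviation_subsingleton.isCompact

instance : DiscreteTopology (PontryaginDual (Cp (Lind D))) := by
  refine PontryaginDual.discreteTopology_of_isCompact isCompact_setOf_deviation_subsingleton
    (fun f hf n => hf.anti fun d hd h => hd (congrArg (· ^ n) h)) ?_
  refine dense_closure_constsAndDeltas.mono (Subgroup.closure_mono ?_)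
  rintro _ (⟨c, rfl⟩ | hf)
  · exact fun _ h => absurd rfl h
  · obtain ⟨d, z, rfl⟩ := Set.mem_iUnion.mp hf
    exact Set.subsingleton_singleton.anti (deviation_elim_mulSingle_subset d z)

theorem mem_closure_range_eval_of_forall_delta (s : Finset D) (χ : PontryaginDual (Cp (Lind D)))
    (hχ : ∀ d ∉ s, ∀ z, χ (delta d z) = 1) : χ ∈ Subgroup.closure (Set.range Cp.eval) := by
  induction s using Finset.induction_on generalizing χ with
  | empty =>
    obtain ⟨a, ha⟩ := Circle.exists_zpow_eq (χ.comp const)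
    have hχ' : χ / Cp.eval (Y := Lind D) none ^ a = 1 := by
      refine PontryaginDual.eq_one_of_dense_closure dense_closure_constsAndDeltas ?_
      rintro _ (⟨c, rfl⟩ | hf)
      · rw [PontryaginDual.div_zpow_apply]
        exact div_eq_one.mpr (ha c)
      · obtain ⟨d, z, rfl⟩ := Set.mem_iUnion.mp hf
        rw [PontryaginDual.div_zpow_apply, hχ d (Finset.notMem_empty d) z]
        exact div_eq_one.mpr (one_zpow a).symm
    rw [div_eq_one.mp hχ']
    exact zpow_mem (Subgroup.subset_closure (Set.mem_range_self _)) a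
  | insert d s _ ih =>
    obtain ⟨b, hb⟩ := Circle.exists_zpow_eq (χ.comp (delta d))
    -- dividing by a power of `eval (some d)` kills `delta d` and no other `delta`
    rw [← div_mul_cancel χ (Cp.eval (Y := Lind D) (some d) ^ b)]
    refine mul_mem (ih _ fun d' hd' z => ?_)
      (zpow_mem (Subgroup.subset_closure (Set.mem_range_self _)) b)
    rw [PontryaginDual.div_zpow_apply]
    change χ (delta d' z) / (Pi.mulSingle d' z : D → Circle) d ^ b = 1
    by_cases h : d' = d
    · subst h
      rw [Pi.mulSingle_eq_same, show χ (delta d' z) = z ^ b from hb z, div_self']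
    · rw [hχ d' (by simp [h, hd']) z, Pi.mulSingle_eq_of_ne (Ne.symm h), one_zpow, div_one]

theorem closure_range_eval : Subgroup.closure (Set.range (Cp.eval (Y := Lind D))) = ⊤ := by
  refine eq_top_iff.mpr fun χ _ => ?_
  obtain ⟨I, hI⟩ := PontryaginDual.exists_finset_forall_eq_one (Cp (Lind D)) χ
  refine mem_closure_range_eval_of_forall_delta (I.preimage some (Option.some_injective D).injOn) χ
    fun d hd z => hI _ fun y hy => ?_
  cases y with
  | none => rfl
  | some d' =>
    refine Pi.mulSingle_eq_of_ne (ι := D) (M := fun _ => Circle) (fun h => hd ?_) z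
    exact Finset.mem_preimage.mpr (h ▸ hy)

end Generators

noncomputable def bidualMulEquiv :
    PontryaginDual (PontryaginDual (Cp (Lind D))) ≃* Circle × (D → Circle) :=
  (MulEquiv.ofBijective Cp.bidualToPi
    ⟨Cp.bidualToPi_injective closure_range_eval, Cp.bidualToPi_surjective dense_Cp⟩).trans
    MulEquiv.piOptionEquivProd

theorem continuous_bidualMulEquiv : Continuous (bidualMulEquiv (D := D)) :=
  MulEquiv.continuous_piOptionEquivProd.comp Cp.continuous_bidualToPi

theorem not_pontryaginReflexive_Cp [Uncountable D] : ¬ PontryaginReflexive (Cp (Lind D)) :=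
  fun h => not_isCompact_Cp (isCompact_iff_compactSpace.mpr h.compactSpace)

end Lind

/-- for the one-point Lindelöfication `Y` of an uncountable discrete set
`D`, the group `C_p(Y, 𝕋)` is not reflexive: its dual is discrete, its bidual is the
compact group `𝕋 × 𝕋^D`, while `C_p(Y, 𝕋)` is a proper dense non-compact subgroup of
`𝕋^Y`. -/
theorem statement18 (D : Type*) [Uncountable D] :
    DiscreteTopology (PontryaginDual (Cp (Lind D))) ∧
    (∃ e : PontryaginDual (PontryaginDual (Cp (Lind D))) ≃* (Circle × (D → Circle)),
        Continuous e ∧ Continuous e.symm) ∧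
    Dense ((Cp (Lind D) : Subgroup (Lind D → Circle)) : Set (Lind D → Circle)) ∧
    (Cp (Lind D) : Subgroup (Lind D → Circle)) ≠ ⊤ ∧
    ¬ IsCompact ((Cp (Lind D) : Subgroup (Lind D → Circle)) : Set (Lind D → Circle)) ∧
    ¬ PontryaginReflexive (Cp (Lind D)) :=
  ⟨inferInstance,
    ⟨Lind.bidualMulEquiv, Lind.continuous_bidualMulEquiv,
      Lind.bidualMulEquiv.continuous_symm_of_compactSpace Lind.continuous_bidualMulEquiv⟩,
    Lind.dense_Cp, Lind.Cp_ne_top, Lind.not_isCompact_Cp, Lind.not_pontryaginReflexive_Cp⟩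
end
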